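/- Let M > 0 and let f : ℝ³ → [0,∞) be measurable with ∫ f dp = M and ∫ |p| f dp ≤ K < ∞. Then for every q ∈ (1,2), ‖f‖_{L^q(ℝ³)} ≥ c(q) M^{(4q−3)/q} K^{−3(q−1)/q} for an explicit constant c(q) > 0 depending only on q. -/

import Mathlib

open MeasureTheory Metric ENNReal

/-! Split the mass at a radius `R`. On the ball, Hölder gives
`∫_{B_R} f ≤ ‖f‖_q |B_R|^{1-1/q}`; off the ball `|p| ≥ R`, so `∫_{B_Rᶜ} f ≤ K / R`.
For `R = 2K/M` the tail is at most `M/2`, hence `M/2 ≤ ‖f‖_q |B_R|^{1-1/q}`, and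
`|B_R| = 4πR³/3` yields `c(q) = (32π/3)^{-(q-1)/q} / 2`. -/

theorem setLIntegral_enorm_le_eLpNorm_mul_measure_rpow {α F : Type*} [MeasurableSpace α]
    [NormedAddCommGroup F] {μ : Measure α} {f : α → F} (hf : AEStronglyMeasurable f μ)
    {p : ℝ≥0∞} (hp : 1 ≤ p) (s : Set α) :
    ∫⁻ x in s, ‖f x‖ₑ ∂μ ≤ eLpNorm f p μ * μ s ^ (1 - 1 / p.toReal) := by
  calc ∫⁻ x in s, ‖f x‖ₑ ∂μ = eLpNorm f 1 (μ.restrict s) := eLpNorm_one_eq_lintegral_enorm.symm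
    _ ≤ eLpNorm f p (μ.restrict s) *
          μ.restrict s Set.univ ^ (1 / (1 : ℝ≥0∞).toReal - 1 / p.toReal) :=
        eLpNorm_le_eLpNorm_mul_rpow_measure_univ hp hf.restrict
    _ ≤ eLpNorm f p μ * μ s ^ (1 - 1 / p.toReal) := by
        rw [Measure.restrict_apply_univ, toReal_one, div_one]
        gcongr
        exact Measure.restrict_le_self

section

variable {E : Type*} [SeminormedAddCommGroup E] [MeasurableSpace E] [OpensMeasurableSpace E]
  {μ : Measure E}

theorem ofReal_mul_setLIntegral_compl_ball_le (g : E → ℝ≥0∞) (R : ℝ) :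
    ENNReal.ofReal R * ∫⁻ x in (ball 0 R)ᶜ, g x ∂μ ≤ ∫⁻ x, ‖x‖ₑ * g x ∂μ :=
  calc ENNReal.ofReal R * ∫⁻ x in (ball 0 R)ᶜ, g x ∂μ
      = ∫⁻ x in (ball 0 R)ᶜ, ENNReal.ofReal R * g x ∂μ :=
        (lintegral_const_mul' _ _ ofReal_ne_top).symm
    _ ≤ ∫⁻ x in (ball 0 R)ᶜ, ‖x‖ₑ * g x ∂μ := by
        refine setLIntegral_mono' measurableSet_ball.compl fun x hx => ?_
        rw [Set.mem_compl_iff, mem_ball_zero_iff, not_lt] at hx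
        gcongr
        rw [← ofReal_norm]
        exact ofReal_le_ofReal hx
    _ ≤ ∫⁻ x, ‖x‖ₑ * g x ∂μ := setLIntegral_le_lintegral _ _

theorem lintegral_enorm_le_eLpNorm_mul_measure_ball_rpow_add {F : Type*} [NormedAddCommGroup F]
    {f : E → F} (hf : AEStronglyMeasurable f μ) {p : ℝ≥0∞} (hp : 1 ≤ p) {R : ℝ} (hR : 0 < R) :
    ∫⁻ x, ‖f x‖ₑ ∂μ ≤
      eLpNorm f p μ * μ (ball 0 R) ^ (1 - 1 / p.toReal) +
        (∫⁻ x, ‖x‖ₑ * ‖f x‖ₑ ∂μ) / ENNReal.ofReal R := by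
  rw [← lintegral_add_compl _ measurableSet_ball]
  gcongr
  · exact setLIntegral_enorm_le_eLpNorm_mul_measure_rpow hf hp _
  · rw [ENNReal.le_div_iff_mul_le (.inl (ofReal_pos.2 hR).ne') (.inl ofReal_ne_top), mul_comm]
    exact ofReal_mul_setLIntegral_compl_ball_le _ R

theorem ofReal_half_le_eLpNorm_mul_measure_ball_rpow {f : E → ℝ} {M K : ℝ} (hf0 : ∀ x, 0 ≤ f x)
    (hf : Integrable f μ) (hfM : ∫ x, f x ∂μ = M) (hM : 0 < M)
    (hmom : Integrable (fun x => ‖x‖ * f x) μ) (hmomK : ∫ x, ‖x‖ * f x ∂μ ≤ K) (hK : 0 < K)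
    {p : ℝ≥0∞} (hp : 1 ≤ p) :
    ENNReal.ofReal (M / 2) ≤ eLpNorm f p μ * μ (ball 0 (2 * K / M)) ^ (1 - 1 / p.toReal) := by
  have hmass : ∫⁻ x, ‖f x‖ₑ ∂μ = ENNReal.ofReal M := by
    rw [← ofReal_integral_norm_eq_lintegral_enorm hf, ← hfM]
    simp_rw [Real.norm_of_nonneg (hf0 _)]
  have hmoment : ∫⁻ x, ‖x‖ₑ * ‖f x‖ₑ ∂μ ≤ ENNReal.ofReal K := by
    have hnorm : ∀ x, ‖x‖ₑ * ‖f x‖ₑ = ‖‖x‖ * f x‖ₑ := fun x => by rw [enorm_mul, enorm_norm]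
    simp_rw [hnorm, ← ofReal_integral_norm_eq_lintegral_enorm hmom,
      Real.norm_of_nonneg (mul_nonneg (norm_nonneg _) (hf0 _))]
    exact ofReal_le_ofReal hmomK
  have htail : (∫⁻ x, ‖x‖ₑ * ‖f x‖ₑ ∂μ) / ENNReal.ofReal (2 * K / M) ≤ ENNReal.ofReal (M / 2) := by
    calc (∫⁻ x, ‖x‖ₑ * ‖f x‖ₑ ∂μ) / ENNReal.ofReal (2 * K / M)
        ≤ ENNReal.ofReal K / ENNReal.ofReal (2 * K / M) := by gcongr
      _ = ENNReal.ofReal (M / 2) := by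
        rw [← ofReal_div_of_pos (by positivity)]
        congr 1
        field_simp
  have hhalves : ENNReal.ofReal M = ENNReal.ofReal (M / 2) + ENNReal.ofReal (M / 2) := by
    rw [← ofReal_add (by positivity) (by positivity), add_halves]
  have hbound := lintegral_enorm_le_eLpNorm_mul_measure_ball_rpow_add hf.aestronglyMeasurable hp
    (by positivity : 0 < 2 * K / M) (μ := μ)
  rw [hmass, hhalves] at hbound
  exact ENNReal.le_of_add_le_add_right ofReal_ne_top (hbound.trans (by gcongr))

end

open Real in
theorem half_div_volume_ball_rpow_eq {M K : ℝ} (hM : 0 < M) (hK : 0 < K) (a : ℝ) :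
    M / 2 / ((2 * K / M) ^ 3 * (π * 4 / 3)) ^ a =
      (32 * π / 3) ^ (-a) / 2 * M ^ (1 + 3 * a) * K ^ (-(3 * a)) := by
  have hsplit : (2 * K / M) ^ 3 * (π * 4 / 3) = 32 * π / 3 * (K / M) ^ 3 := by ring
  rw [hsplit, Real.mul_rpow (by positivity) (by positivity), ← Real.rpow_natCast,
    ← Real.rpow_mul (by positivity), Real.div_rpow hK.le hM.le, Real.rpow_add hM,
    Real.rpow_one, Real.rpow_neg (by positivity), Real.rpow_neg hK.le]
  push_cast
  field_simp

open Real in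
theorem stmt_14 (q : ℝ) (hq1 : 1 < q) :
    ∃ c : ℝ, 0 < c ∧
      ∀ (f : EuclideanSpace ℝ (Fin 3) → ℝ) (M K : ℝ),
        Measurable f → (∀ p, 0 ≤ f p) → Integrable f →
        (∫ p, f p) = M → 0 < M →
        Integrable (fun p => ‖p‖ * f p) → (∫ p, ‖p‖ * f p) ≤ K → 0 < K →
        ENNReal.ofReal (c * M ^ ((4 * q - 3) / q) * K ^ (-(3 * (q - 1) / q))) ≤
          eLpNorm f (ENNReal.ofReal q) volume := by
  have ha : 1 - 1 / (ENNReal.ofReal q).toReal = (q - 1) / q := by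
    rw [toReal_ofReal (by linarith)]
    field_simp
  have hexp : (4 * q - 3) / q = 1 + 3 * ((q - 1) / q) := by field_simp; ring
  refine ⟨(32 * π / 3) ^ (-((q - 1) / q)) / 2, by positivity, ?_⟩
  intro f M K _ hf0 hf hfM hM hmom hmomK hK
  have hq : 1 ≤ ENNReal.ofReal q := by rw [← ofReal_one]; exact ofReal_le_ofReal hq1.le
  have hhalf := ofReal_half_le_eLpNorm_mul_measure_ball_rpow hf0 hf hfM hM hmom hmomK hK hq
  rw [EuclideanSpace.volume_ball_fin_three, ← ofReal_pow (by positivity),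
    ← ofReal_mul (by positivity), ofReal_rpow_of_pos (by positivity), ha] at hhalf
  rw [hexp, mul_div_assoc 3, ← half_div_volume_ball_rpow_eq hM hK,
    ofReal_div_of_pos (by positivity)]
  exact ENNReal.div_le_of_le_mul hhalf
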